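/- arXiv:2205.14790 — 4 statements merged into one kernel-verified Lean document; each statement's English description precedes it below -/
import Mathlib

section
/- Let f : 2^[n] → ℝ be a submodular function on a ground set of n ≥ 2 elements, and let ι_a, ι_b be two distinct elements. For y ∈ [0,1]^n with y_{ι_a} + y_{ι_b} ≤ 1, let D(y) be the distribution over subsets where each element i ∉ {ι_a, ι_b} is included independently with probability y_i, and ι_a, ι_b are included with marginal probabilities y_{ι_a}, y_{ι_b} respectively but mutually exclusively (never both, independent of the other elements). Let I(y) be the fully independent inclusion distribution with the same marginals. Then E_{S∼D(y)}[f(S)] ≥ E_{S∼I(y)}[f(S)]. -/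
/-!
Condition on the elements outside `{ιa, ιb}`. For a fixed remainder `S`, the independent
distribution exceeds the exclusive one by the mass `y ιa * y ιb` on `S` and on `S ∪ {ιa, ιb}`,
and falls short of it by the same mass on `S ∪ {ιa}` and on `S ∪ {ιb}`. So the conditional
expectations differ by `y ιa * y ιb * (f (S ∪ {ιa}) + f (S ∪ {ιb}) - f S - f (S ∪ {ιa, ιb}))`,
which is nonnegative by submodularity.
-/

open Finset

section IndepExpect

variable {α R : Type*} [DecidableEq α]

/-- `E_{S ∼ I(y)} [g S]`, with `I(y)` the independent distribution on subsets of `s`. -/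
def indepExpect [CommRing R] (s : Finset α) (y : α → R) (g : Finset α → R) : R :=
  ∑ S ∈ s.powerset, (∏ i ∈ S, y i) * (∏ i ∈ s \ S, (1 - y i)) * g S

theorem indepExpect_insert [CommRing R] {s : Finset α} {a : α} (ha : a ∉ s) (y : α → R)
    (g : Finset α → R) :
    indepExpect (insert a s) y g =
      indepExpect s y (fun S => (1 - y a) * g S + y a * g (insert a S)) := by
  unfold indepExpect
  rw [sum_powerset_insert ha, ← sum_add_distrib]
  refine sum_congr rfl fun S hS => ?_
  have haS : a ∉ S := fun h => ha (mem_powerset.mp hS h)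
  have hcompl : insert a s \ S = insert a (s \ S) := insert_sdiff_of_notMem _ haS
  have hcompl_insert : insert a s \ insert a S = s \ S := by
    rw [insert_sdiff_insert, sdiff_insert_of_notMem ha]
  rw [hcompl, hcompl_insert, prod_insert (fun h => ha (mem_sdiff.mp h).1), prod_insert haS]
  ring

theorem indepExpect_mono [CommRing R] [LinearOrder R] [IsStrictOrderedRing R] {s : Finset α}
    {y : α → R} (hy : ∀ i ∈ s, y i ∈ Set.Icc 0 1) {g h : Finset α → R}
    (hgh : ∀ S ⊆ s, g S ≤ h S) : indepExpect s y g ≤ indepExpect s y h := by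
  refine sum_le_sum fun S hS => mul_le_mul_of_nonneg_left (hgh S (mem_powerset.mp hS)) ?_
  have hSs := mem_powerset.mp hS
  exact mul_nonneg (prod_nonneg fun i hi => (hy i (hSs hi)).1)
    (prod_nonneg fun i hi => sub_nonneg.mpr (hy i (mem_sdiff.mp hi).1).2)

theorem indepExpect_insert_insert_le_of_submodular {s : Finset α} {a b : α} (hab : a ≠ b)
    (ha : a ∉ s) (hb : b ∉ s) {f : Finset α → ℝ}
    (hsub : ∀ S T : Finset α, f (S ∪ T) + f (S ∩ T) ≤ f S + f T)
    {y : α → ℝ} (hy : ∀ i ∈ insert a (insert b s), y i ∈ Set.Icc 0 1) :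
    indepExpect (insert a (insert b s)) y f ≤
      indepExpect s y
        (fun S => (1 - y a - y b) * f S + y a * f (insert a S) + y b * f (insert b S)) := by
  rw [indepExpect_insert (by simp [hab, ha]), indepExpect_insert hb]
  refine indepExpect_mono (fun i hi => hy i (by simp [hi])) fun S hS => ?_
  have hunion : insert a S ∪ insert b S = insert a (insert b S) := by
    rw [insert_union, union_insert, union_self]
  have hinter : insert a S ∩ insert b S = S := by
    rw [insert_inter_of_notMem fun h => (mem_insert.mp h).elim hab (fun h => ha (hS h)),
      inter_eq_left.mpr (subset_insert b S)]
  have hsubS := hsub (insert a S) (insert b S)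
  rw [hunion, hinter] at hsubS
  have hmass : 0 ≤ y a * y b := mul_nonneg (hy a (by simp)).1 (hy b (by simp)).1
  linear_combination mul_nonneg hmass (sub_nonneg.mpr hsubS)

end IndepExpect

theorem stmt_0_general {n : ℕ} (f : Finset (Fin n) → ℝ)
    (hsub : ∀ S T : Finset (Fin n), f (S ∪ T) + f (S ∩ T) ≤ f S + f T)
    (ιa ιb : Fin n) (hab : ιa ≠ ιb)
    (y : Fin n → ℝ) (hy : ∀ i, y i ∈ Set.Icc (0:ℝ) 1) :
    -- E_{S ∼ I(y)} [f S]
    (∑ S ∈ (Finset.univ : Finset (Fin n)).powerset,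
        (∏ i ∈ S, y i) * (∏ i ∈ Finset.univ \ S, (1 - y i)) * f S)
    ≤
    -- E_{S ∼ D(y)} [f S]
    ∑ S' ∈ ((Finset.univ : Finset (Fin n)) \ {ιa, ιb}).powerset,
        (∏ i ∈ S', y i) * (∏ i ∈ (Finset.univ \ {ιa, ιb}) \ S', (1 - y i)) *
          ((1 - y ιa - y ιb) * f S' + y ιa * f (insert ιa S') + y ιb * f (insert ιb S')) := by
  have hrest : insert ιa (insert ιb (univ \ {ιa, ιb})) = (univ : Finset (Fin n)) := by
    ext i
    by_cases i = ιa <;> by_cases i = ιb <;> simp_all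
  have hcond := indepExpect_insert_insert_le_of_submodular (s := univ \ {ιa, ιb}) hab
    (by simp) (by simp) hsub fun i _ => hy i
  rwa [hrest] at hcond

/-- Mutually-exclusive vs independent sampling for submodular functions:
the expectation of a submodular `f` under the distribution `D(y)` where `ιa, ιb` are
mutually exclusive (with marginals `y ιa, y ιb`) and all other elements independent,
dominates the expectation under the fully independent distribution `I(y)`. -/
theorem stmt_0 {n : ℕ} (hn : 2 ≤ n) (f : Finset (Fin n) → ℝ)
    (hsub : ∀ S T : Finset (Fin n), f (S ∪ T) + f (S ∩ T) ≤ f S + f T)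
    (ιa ιb : Fin n) (hab : ιa ≠ ιb)
    (y : Fin n → ℝ) (hy : ∀ i, y i ∈ Set.Icc (0:ℝ) 1) (hsum : y ιa + y ιb ≤ 1) :
    -- E_{S ∼ I(y)} [f S]
    (∑ S ∈ (Finset.univ : Finset (Fin n)).powerset,
        (∏ i ∈ S, y i) * (∏ i ∈ Finset.univ \ S, (1 - y i)) * f S)
    ≤
    -- E_{S ∼ D(y)} [f S]
    ∑ S' ∈ ((Finset.univ : Finset (Fin n)) \ {ιa, ιb}).powerset,
        (∏ i ∈ S', y i) * (∏ i ∈ (Finset.univ \ {ιa, ιb}) \ S', (1 - y i)) *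
          ((1 - y ιa - y ιb) * f S' + y ιa * f (insert ιa S') + y ιb * f (insert ιb S')) :=
  stmt_0_general f hsub ιa ιb hab y hy
end

section
/- Let w ∈ [0,∞)^n, let k ≤ n be a positive integer, and let f_{w,k}(S) = max{ Σ_{i∈I} w_i : I ⊆ S, |I| ≤ k } be the weighted rank function of the rank-k uniform matroid. If y ∈ [0,1]^n satisfies Σ_i y_i ≤ k, then the concave closure satisfies f⁺_{w,k}(y) ≥ Σ_i w_i · y_i. -/
/-- The weighted rank function of the rank-`k` uniform matroid with weights `w`:
`fwk w k S = max { ∑_{i ∈ I} w i : I ⊆ S, |I| ≤ k }`. -/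
noncomputable def fwk {n : ℕ} (w : Fin n → ℝ) (k : ℕ) (S : Finset (Fin n)) : ℝ :=
  sSup {r : ℝ | ∃ I : Finset (Fin n), I ⊆ S ∧ I.card ≤ k ∧ r = ∑ i ∈ I, w i}

/-- The concave closure of a set function `f` at `y`: the supremum of `E_{S∼D}[f S]`
over distributions `D` on `2^[n]` with marginals `y`. -/
noncomputable def concClosure {n : ℕ} (f : Finset (Fin n) → ℝ) (y : Fin n → ℝ) : ℝ :=
  sSup {r : ℝ | ∃ α : Finset (Fin n) → ℝ,
    (∀ S, 0 ≤ α S) ∧ (∑ S : Finset (Fin n), α S) = 1 ∧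
    (∀ i, (∑ S : Finset (Fin n), if i ∈ S then α S else 0) = y i) ∧
    r = ∑ S : Finset (Fin n), α S * f S}

/-!
The polytope `{y ∈ [0,1]^ι : ∑ y ≤ k}` is compact and convex, and its extreme points are
`0/1` vectors: a fractional coordinate can be moved by `±ε` on its own when `∑ y < k`, and
against a second fractional coordinate when `∑ y = k` (there must be one, as `k` is an integer).
By Krein–Milman, `y` is therefore a convex combination of indicators of sets `S` with `|S| ≤ k`.
For such `S`, `f_{w,k}(S) ≥ ∑_{i ∈ S} w i`, and averaging over this distribution, whose
marginals are `y`, gives `∑ w i * y i ≤ f⁺_{w,k}(y)`.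
-/

open Finset

def uniformMatroidIndepPolytope (ι : Type*) [Fintype ι] (k : ℕ) : Set (ι → ℝ) :=
  Set.Icc 0 1 ∩ {y | ∑ i, y i ≤ k}

section Polytope

variable {ι : Type*} [Fintype ι] {k : ℕ}

lemma convex_uniformMatroidIndepPolytope : Convex ℝ (uniformMatroidIndepPolytope ι k) :=
  (convex_Icc 0 1).inter <| convex_halfSpace_le
    ⟨fun x y => by simp [sum_add_distrib], fun c x => by simp [mul_sum]⟩ _

lemma isCompact_uniformMatroidIndepPolytope : IsCompact (uniformMatroidIndepPolytope ι k) :=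
  isCompact_Icc.inter_right (isClosed_le (by fun_prop) continuous_const)

lemma notMem_extremePoints_of_add_mem_of_sub_mem {E : Type*} [AddCommGroup E] [Module ℝ E]
    {A : Set E} {x d : E} (hd : d ≠ 0) (hadd : x + d ∈ A) (hsub : x - d ∈ A) :
    x ∉ A.extremePoints ℝ := by
  intro hx
  have hseg : x ∈ openSegment ℝ (x + d) (x - d) :=
    ⟨1 / 2, 1 / 2, by norm_num, by norm_num, by norm_num, by module⟩
  have := ((mem_extremePoints.1 hx).2 _ hadd _ hsub hseg).1
  exact hd (by simpa using this)

lemma add_mem_and_sub_mem_uniformMatroidIndepPolytope {y d : ι → ℝ}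
    (hd : ∀ l, |d l| ≤ y l ∧ |d l| ≤ 1 - y l) (hsum : ∑ l, y l + |∑ l, d l| ≤ k) :
    y + d ∈ uniformMatroidIndepPolytope ι k ∧ y - d ∈ uniformMatroidIndepPolytope ι k := by
  have hbox (l) : 0 ≤ y l - |d l| ∧ y l + |d l| ≤ 1 := ⟨by linarith [hd l], by linarith [hd l]⟩
  have hd_abs (l) := abs_le.1 (le_refl |d l|)
  have hsum_abs := abs_le.1 (le_refl |∑ l, d l|)
  refine ⟨⟨⟨fun l => ?_, fun l => ?_⟩, ?_⟩, ⟨⟨fun l => ?_, fun l => ?_⟩, ?_⟩⟩ <;>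
    simp only [Set.mem_ofPred_eq, Pi.add_apply, Pi.sub_apply, Pi.zero_apply, Pi.one_apply,
      sum_add_distrib, sum_sub_distrib]
  · linarith [hbox l, hd_abs l]
  · linarith [hbox l, hd_abs l]
  · linarith
  · linarith [hbox l, hd_abs l]
  · linarith [hbox l, hd_abs l]
  · linarith

lemma exists_ne_mem_Ioo_of_sum_eq {y : ι → ℝ} (hy : y ∈ Set.Icc 0 1) (hsum : ∑ l, y l = k)
    {i : ι} (hi : y i ∈ Set.Ioo 0 1) : ∃ j ≠ i, y j ∈ Set.Ioo 0 1 := by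
  classical
  by_contra! hint
  have hbool : ∀ j ∈ univ.erase i, y j = if y j = 1 then 1 else 0 := by
    intro j hj
    have := hint j (ne_of_mem_erase hj)
    split_ifs with h1
    · exact h1
    · by_contra h0
      exact this ⟨lt_of_le_of_ne (hy.1 j) (Ne.symm h0), lt_of_le_of_ne (hy.2 j) h1⟩
  set m := #{j ∈ univ.erase i | y j = 1}
  -- the other coordinates are `0` or `1`, so `y i = k - m` would be an integer in `(0, 1)`
  have hyi : y i + m = k := by
    rw [← hsum, ← add_sum_erase univ y (mem_univ i), sum_congr rfl hbool, sum_boole]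
  have hmk : m < k := by exact_mod_cast (show (m : ℝ) < k by linarith [hi.1])
  have hkm : k < m + 1 := by exact_mod_cast (show (k : ℝ) < m + 1 by linarith [hi.2])
  omega

lemma eq_zero_or_eq_one_of_mem_extremePoints {y : ι → ℝ}
    (hy : y ∈ (uniformMatroidIndepPolytope ι k).extremePoints ℝ) (i : ι) : y i = 0 ∨ y i = 1 := by
  classical
  obtain ⟨hy01, hyk⟩ := hy.1
  by_contra! hi
  have hi' : y i ∈ Set.Ioo 0 1 :=
    ⟨lt_of_le_of_ne (hy01.1 i) hi.1.symm, lt_of_le_of_ne (hy01.2 i) hi.2⟩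
  have hbox (l) : 0 ≤ y l ∧ 0 ≤ 1 - y l := ⟨hy01.1 l, sub_nonneg.2 (hy01.2 l)⟩
  obtain ⟨d, hd0, hd, hdsum⟩ : ∃ d : ι → ℝ, d ≠ 0 ∧ (∀ l, |d l| ≤ y l ∧ |d l| ≤ 1 - y l) ∧
      ∑ l, y l + |∑ l, d l| ≤ k := by
    rcases (show ∑ l, y l ≤ k from hyk).lt_or_eq with hlt | heq
    · set ε := min (min (y i) (1 - y i)) (k - ∑ l, y l)
      have hε : 0 < ε := lt_min (lt_min hi'.1 (by linarith [hi'.2])) (by linarith)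
      refine ⟨Pi.single i ε, by simpa using hε.ne', fun l => ?_, ?_⟩
      · by_cases hl : l = i
        · subst hl
          simp [abs_of_pos hε, ε]
        · simpa [Pi.single_apply, hl] using hbox l
      · simp only [sum_pi_single', mem_univ, if_true, abs_of_pos hε]
        linarith [min_le_right (min (y i) (1 - y i)) (k - ∑ l, y l)]
    · obtain ⟨j, hji, hj⟩ := exists_ne_mem_Ioo_of_sum_eq hy01 heq hi'
      set ε := min (min (y i) (1 - y i)) (min (y j) (1 - y j))
      have hε : 0 < ε :=
        lt_min (lt_min hi'.1 (by linarith [hi'.2])) (lt_min hj.1 (by linarith [hj.2]))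
      refine ⟨Pi.single i ε - Pi.single j ε, fun h => ?_, fun l => ?_, ?_⟩
      · simpa [Pi.single_apply, hji.symm, hε.ne'] using congrFun h i
      · by_cases hli : l = i
        · subst hli
          simp [hji, abs_of_pos hε, ε]
        · by_cases hlj : l = j
          · subst hlj
            simp [hli, abs_of_pos hε, ε]
          · simpa [Pi.single_apply, hli, hlj] using hbox l
      · simp [sum_sub_distrib, sum_pi_single', heq]
  obtain ⟨hadd, hsub⟩ := add_mem_and_sub_mem_uniformMatroidIndepPolytope hd hdsum
  exact notMem_extremePoints_of_add_mem_of_sub_mem hd0 hadd hsub hy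

lemma uniformMatroidIndepPolytope_subset_convexHull :
    uniformMatroidIndepPolytope ι k ⊆
      convexHull ℝ ((fun S : Finset ι => (S : Set ι).indicator 1) '' {S | #S ≤ k}) := by
  classical
  have hext : (uniformMatroidIndepPolytope ι k).extremePoints ℝ ⊆
      (fun S : Finset ι => (S : Set ι).indicator 1) '' {S | #S ≤ k} := by
    intro y hy
    have h01 := eq_zero_or_eq_one_of_mem_extremePoints hy
    have hy_eq : y = ((univ.filter fun i => y i = 1 : Finset ι) : Set ι).indicator 1 := by
      funext i
      rcases h01 i with h | h <;> simp [h]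
    refine ⟨_, ?_, hy_eq.symm⟩
    have hsum : ∑ i, y i ≤ k := hy.1.2
    rw [hy_eq] at hsum
    simp only [Set.indicator_apply, coe_filter, Set.mem_ofPred_eq, mem_univ, true_and,
      Pi.one_apply, sum_boole] at hsum
    exact_mod_cast hsum
  calc uniformMatroidIndepPolytope ι k
      = closure (convexHull ℝ ((uniformMatroidIndepPolytope ι k).extremePoints ℝ)) :=
        (closure_convexHull_extremePoints isCompact_uniformMatroidIndepPolytope
          convex_uniformMatroidIndepPolytope).symm
    _ ⊆ closure (convexHull ℝ ((fun S : Finset ι => (S : Set ι).indicator 1) '' {S | #S ≤ k})) :=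
        closure_mono (convexHull_mono hext)
    _ = convexHull ℝ ((fun S : Finset ι => (S : Set ι).indicator 1) '' {S | #S ≤ k}) :=
        ((Set.toFinite _).isCompact_convexHull ℝ).isClosed.closure_eq

end Polytope

lemma exists_weights_of_mem_convexHull_image {κ E : Type*} [Fintype κ] [AddCommGroup E]
    [Module ℝ E] {v : κ → E} {s : Set κ} {x : E} (hx : x ∈ convexHull ℝ (v '' s)) :
    ∃ α : κ → ℝ, (∀ j, 0 ≤ α j) ∧ ∑ j, α j = 1 ∧ (∀ j, α j ≠ 0 → j ∈ s) ∧
      ∑ j, α j • v j = x := by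
  classical
  obtain ⟨ι, _, w, z, hw0, hw1, hz, rfl⟩ := mem_convexHull_iff_exists_fintype.1 hx
  choose g hgs hgz using hz
  refine ⟨fun j => ∑ a with g a = j, w a, fun j => sum_nonneg fun a _ => hw0 a,
    (sum_fiberwise univ g w).trans hw1, fun j hj => ?_, ?_⟩
  · obtain ⟨a, ha, -⟩ := exists_ne_zero_of_sum_ne_zero hj
    exact (mem_filter.1 ha).2 ▸ hgs a
  · rw [← sum_fiberwise univ g fun a => w a • z a]
    refine sum_congr rfl fun j _ => ?_
    rw [sum_smul]
    exact sum_congr rfl fun a ha => by rw [← (mem_filter.1 ha).2, hgz]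

lemma sum_mul_sum_ite_mem {ι : Type*} [Fintype ι] [DecidableEq ι] (w : ι → ℝ)
    (α : Finset ι → ℝ) :
    ∑ i, w i * ∑ S, (if i ∈ S then α S else 0) = ∑ S, α S * ∑ i ∈ S, w i := by
  simp_rw [mul_sum, mul_ite, mul_zero]
  rw [sum_comm]
  refine sum_congr rfl fun S _ => ?_
  rw [sum_ite_mem, univ_inter]
  exact sum_congr rfl fun i _ => mul_comm _ _

lemma sum_le_fwk {n k : ℕ} (w : Fin n → ℝ) {S : Finset (Fin n)} (hS : #S ≤ k) :
    ∑ i ∈ S, w i ≤ fwk w k S := by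
  refine le_csSup (Set.Finite.bddAbove ?_) ⟨S, subset_rfl, hS, rfl⟩
  refine (Set.finite_range fun I : Finset (Fin n) => ∑ i ∈ I, w i).subset ?_
  rintro r ⟨I, -, -, rfl⟩
  exact ⟨I, rfl⟩

lemma le_concClosure {n : ℕ} (f : Finset (Fin n) → ℝ) {y : Fin n → ℝ} {α : Finset (Fin n) → ℝ}
    (hα0 : ∀ S, 0 ≤ α S) (hα1 : ∑ S, α S = 1)
    (hαy : ∀ i, ∑ S, (if i ∈ S then α S else 0) = y i) :
    ∑ S, α S * f S ≤ concClosure f y := by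
  obtain ⟨M, hM⟩ := Finite.bddAbove_range f
  refine le_csSup ⟨M, ?_⟩ ⟨α, hα0, hα1, hαy, rfl⟩
  rintro r ⟨β, hβ0, hβ1, -, rfl⟩
  calc ∑ S, β S * f S ≤ ∑ S, β S * M :=
        sum_le_sum fun S _ => mul_le_mul_of_nonneg_left (hM ⟨S, rfl⟩) (hβ0 S)
    _ = M := by rw [← sum_mul, hβ1, one_mul]

theorem stmt_3_general {n : ℕ} (k : ℕ)
    (w : Fin n → ℝ)
    (y : Fin n → ℝ) (hy : ∀ i, y i ∈ Set.Icc (0:ℝ) 1) (hyk : (∑ i, y i) ≤ (k : ℝ)) :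
    ∑ i, w i * y i ≤ concClosure (fwk w k) y := by
  have hyP : y ∈ uniformMatroidIndepPolytope (Fin n) k :=
    ⟨⟨fun i => (hy i).1, fun i => (hy i).2⟩, hyk⟩
  obtain ⟨α, hα0, hα1, hαk, hαy⟩ :=
    exists_weights_of_mem_convexHull_image (uniformMatroidIndepPolytope_subset_convexHull hyP)
  have hmarg (i : Fin n) : ∑ S, (if i ∈ S then α S else 0) = y i := by
    simp [← hαy, Set.indicator_apply]
  calc ∑ i, w i * y i = ∑ S, α S * ∑ i ∈ S, w i := by
        simp_rw [← hmarg]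
        exact sum_mul_sum_ite_mem w α
    _ ≤ ∑ S, α S * fwk w k S := sum_le_sum fun S _ => by
        by_cases hS : α S = 0
        · simp [hS]
        · exact mul_le_mul_of_nonneg_left (sum_le_fwk w (hαk S hS)) (hα0 S)
    _ ≤ concClosure (fwk w k) y := le_concClosure _ hα0 hα1 hmarg

/-- If `y ∈ [0,1]^n` satisfies `∑ i, y i ≤ k`, then the concave closure of the weighted
rank function of the rank-`k` uniform matroid satisfies `f⁺_{w,k}(y) ≥ ∑ i, w i * y i`. -/
theorem stmt_3 {n : ℕ} (k : ℕ) (hk : 0 < k) (hkn : k ≤ n)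
    (w : Fin n → ℝ) (hw : ∀ i, 0 ≤ w i)
    (y : Fin n → ℝ) (hy : ∀ i, y i ∈ Set.Icc (0:ℝ) 1) (hyk : (∑ i, y i) ≤ (k : ℝ)) :
    ∑ i, w i * y i ≤ concClosure (fwk w k) y :=
  stmt_3_general k w y hy hyk
end

section
/- Consider the k-RB planning problem with arms A = {1,…,n}, monotone non-decreasing payoff functions p_i : ℕ → [0,1], where at most k arms may be played per round, and each arm starts with delay 1. Let V* be the optimal value of the LP: maximize Σ_i Σ_τ p_i(τ)·x_{i,τ} subject to Σ_i Σ_τ x_{i,τ} ≤ k, Σ_τ τ·x_{i,τ} ≤ 1 for all i, and x ≥ 0. Then for any feasible schedule of T rounds, the total payoff collected is at most T·V*. In particular T·V* ≥ OPT(T). -/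
/-!
Let `N i τ` count the plays of arm `i` at delay `τ` during the first `T` rounds, and take
`x i τ = N i τ / T`. At most `k` arms are played per round, so `∑ x ≤ k`. The rounds `[lastPlay t, t)` preceding the plays of a fixed arm are pairwise disjoint
subintervals of `[0, T)` of lengths equal to the delays, so `∑ τ x i τ ≤ 1`. Hence `x` is
LP-feasible, and its objective value is the average payoff per round.
-/

/-- The round at which arm `i` was last played strictly before round `t`
(all arms are considered played at round `0`). -/
def lastPlay {n : ℕ} (play : ℕ → Finset (Fin n)) (i : Fin n) (t : ℕ) : ℕ :=
  ((Finset.range t).filter (fun s => s = 0 ∨ i ∈ play s)).sup id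

/-- The delay of arm `i` at round `t`: the number of rounds since its last play. -/
def delay {n : ℕ} (play : ℕ → Finset (Fin n)) (i : Fin n) (t : ℕ) : ℕ :=
  t - lastPlay play i t

open Finset

section Schedule

variable {n : ℕ} (play : ℕ → Finset (Fin n))

lemma le_lastPlay {i : Fin n} {s t : ℕ} (hs : i ∈ play s) (hst : s < t) :
    s ≤ lastPlay play i t :=
  le_sup (f := id) (mem_filter.2 ⟨mem_range.2 hst, Or.inr hs⟩)

lemma pairwiseDisjoint_Ico_lastPlay (i : Fin n) :
    {t | i ∈ play t}.PairwiseDisjoint fun t => Ico (lastPlay play i t) t := by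
  suffices h : ∀ s t, i ∈ play s → s < t →
      Disjoint (Ico (lastPlay play i s) s) (Ico (lastPlay play i t) t) by
    intro s hs t ht hst
    obtain hlt | hgt := lt_or_gt_of_ne hst
    · exact h s t hs hlt
    · exact (h t s ht hgt).symm
  intro s t hs hst
  have := le_lastPlay play hs hst
  exact disjoint_left.2 fun x hxs hxt => by
    simp only [mem_Ico] at hxs hxt
    omega

def playRounds (i : Fin n) (T : ℕ) : Finset ℕ := {t ∈ Icc 1 T | i ∈ play t}

def playCount (T : ℕ) (i : Fin n) (τ : ℕ) : ℕ := #{t ∈ playRounds play i T | delay play i t = τ}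

noncomputable def playFrequency (T : ℕ) (i : Fin n) (τ : ℕ) : ℝ := playCount play T i τ / T

lemma sum_delay_playRounds_le (i : Fin n) (T : ℕ) :
    ∑ t ∈ playRounds play i T, delay play i t ≤ T := by
  have hdisj : (playRounds play i T : Set ℕ).PairwiseDisjoint
      fun t => Ico (lastPlay play i t) t :=
    (pairwiseDisjoint_Ico_lastPlay play i).subset fun t ht => (mem_filter.1 ht).2
  calc ∑ t ∈ playRounds play i T, delay play i t
      = ∑ t ∈ playRounds play i T, #(Ico (lastPlay play i t) t) := by
        simp only [Nat.card_Ico, delay]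
    _ = #((playRounds play i T).biUnion fun t => Ico (lastPlay play i t) t) :=
        (card_biUnion hdisj).symm
    _ ≤ #(range T) := card_le_card fun x hx => by
        obtain ⟨t, ht, hxt⟩ := mem_biUnion.1 hx
        exact mem_range.2 ((mem_Ico.1 hxt).2.trans_le (mem_Icc.1 (mem_filter.1 ht).1).2)
    _ = T := card_range T

lemma sum_mul_playCount (i : Fin n) (T : ℕ) (f : ℕ → ℝ) :
    ∑ τ ∈ range (T + 1), f τ * playCount play T i τ
      = ∑ t ∈ playRounds play i T, f (delay play i t) := by
  have hmaps : ∀ t ∈ playRounds play i T, delay play i t ∈ range (T + 1) := fun t ht =>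
    mem_range_succ_iff.2 ((Nat.sub_le _ _).trans (mem_Icc.1 (mem_filter.1 ht).1).2)
  rw [← sum_fiberwise_of_maps_to' hmaps]
  simp only [sum_const, nsmul_eq_mul, playCount, mul_comm]

lemma sum_sum_play_eq_sum_sum_playRounds (T : ℕ) (F : Fin n → ℕ → ℝ) :
    ∑ t ∈ Icc 1 T, ∑ i ∈ play t, F i t = ∑ i, ∑ t ∈ playRounds play i T, F i t :=
  sum_comm' fun t i => by simp [playRounds, and_comm]

lemma sum_sum_mul_playFrequency (T : ℕ) (F : Fin n → ℕ → ℝ) :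
    ∑ i, ∑ τ ∈ range (T + 1), F i τ * playFrequency play T i τ
      = (∑ t ∈ Icc 1 T, ∑ i ∈ play t, F i (delay play i t)) / T := by
  simp only [playFrequency, ← mul_div_assoc, ← sum_div, sum_mul_playCount,
    sum_sum_play_eq_sum_sum_playRounds]

lemma sum_sum_playFrequency_le {k : ℕ} (hcard : ∀ t, #(play t) ≤ k) (T : ℕ) :
    ∑ i, ∑ τ ∈ range (T + 1), playFrequency play T i τ ≤ k := by
  have h := sum_sum_mul_playFrequency play T fun _ _ => 1
  simp only [one_mul, sum_const, nsmul_eq_mul, mul_one] at h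
  rw [h]
  refine div_le_of_le_mul₀ T.cast_nonneg k.cast_nonneg ?_
  calc ∑ t ∈ Icc 1 T, (#(play t) : ℝ) ≤ ∑ _t ∈ Icc 1 T, (k : ℝ) :=
        sum_le_sum fun t _ => by exact_mod_cast hcard t
    _ = k * T := by simp [mul_comm]

lemma sum_mul_playFrequency_le (T : ℕ) (i : Fin n) :
    ∑ τ ∈ range (T + 1), (τ : ℝ) * playFrequency play T i τ ≤ 1 := by
  simp only [playFrequency, ← mul_div_assoc, ← sum_div, sum_mul_playCount]
  exact div_le_one_of_le₀ (by exact_mod_cast sum_delay_playRounds_le play i T) T.cast_nonneg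

end Schedule

theorem stmt_6_general {n : ℕ} (k T : ℕ) (p : Fin n → ℕ → ℝ)
    (V : ℝ)
    (hV : ∀ x : Fin n → ℕ → ℝ, (∀ i τ, 0 ≤ x i τ) →
      (∑ i, ∑ τ ∈ Finset.range (T + 1), x i τ) ≤ (k : ℝ) →
      (∀ i, (∑ τ ∈ Finset.range (T + 1), (τ : ℝ) * x i τ) ≤ 1) →
      (∑ i, ∑ τ ∈ Finset.range (T + 1), p i τ * x i τ) ≤ V)
    (play : ℕ → Finset (Fin n)) (hcard : ∀ t, (play t).card ≤ k) :
    ∑ t ∈ Finset.Icc 1 T, ∑ i ∈ play t, p i (delay play i t) ≤ (T : ℝ) * V := by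
  obtain rfl | hT := eq_or_ne T 0
  · simp
  have hLP := hV (playFrequency play T) (fun _ _ => by unfold playFrequency; positivity)
    (sum_sum_playFrequency_le play hcard T) (sum_mul_playFrequency_le play T)
  rw [sum_sum_mul_playFrequency] at hLP
  calc ∑ t ∈ Icc 1 T, ∑ i ∈ play t, p i (delay play i t)
      = T * ((∑ t ∈ Icc 1 T, ∑ i ∈ play t, p i (delay play i t)) / T) := by field_simp
    _ ≤ T * V := by gcongr

/-- LP upper bound for k-RB planning: if `V` is (an upper bound attained by) the optimal
value of the LP `max ∑_{i,τ} p_i(τ) x_{i,τ}` s.t. `∑_{i,τ} x_{i,τ} ≤ k`,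
`∑_τ τ · x_{i,τ} ≤ 1` for all `i`, `x ≥ 0`, then any feasible schedule of `T` rounds
(at most `k` arms per round, all arms starting with delay 1) collects total payoff at
most `T · V`. -/
theorem stmt_6 {n : ℕ} (k T : ℕ) (p : Fin n → ℕ → ℝ)
    (hp : ∀ i τ, p i τ ∈ Set.Icc (0:ℝ) 1) (hpmono : ∀ i, Monotone (p i))
    (V : ℝ)
    (hV : ∀ x : Fin n → ℕ → ℝ, (∀ i τ, 0 ≤ x i τ) →
      (∑ i, ∑ τ ∈ Finset.range (T + 1), x i τ) ≤ (k : ℝ) →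
      (∀ i, (∑ τ ∈ Finset.range (T + 1), (τ : ℝ) * x i τ) ≤ 1) →
      (∑ i, ∑ τ ∈ Finset.range (T + 1), p i τ * x i τ) ≤ V)
    (play : ℕ → Finset (Fin n)) (hcard : ∀ t, (play t).card ≤ k) :
    ∑ t ∈ Finset.Icc 1 T, ∑ i ∈ play t, p i (delay play i t) ≤ (T : ℝ) * V :=
  stmt_6_general k T p V hV play hcard
end

section
/- Let x be an extreme point of the LP: maximize Σ_{i∈A} Σ_τ p_i(τ)·x_{i,τ} subject to Σ_i Σ_τ x_{i,τ} ≤ k, Σ_τ τ·x_{i,τ} ≤ 1 for each i ∈ A, x ≥ 0 (with finitely many variables, τ ranging over [τ^max]). Then x is almost-delay-feasible: for every arm i supported in x (i.e., x_{i,τ} > 0 for some τ), with the possible exception of a single arm ι, there is a unique τ_i with x_{i,τ_i} > 0, and moreover x_{i,τ_i} = 1/τ_i; the exceptional arm ι may have at most two nonzero variables x_{ι,τ_a}, x_{ι,τ_b} with x_{ι,τ_a} < 1/τ_a and x_{ι,τ_b} < 1/τ_b. -/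
/-!
An extreme point `x` admits no nonzero direction `d` such that `x ± t • d` is feasible for
small `t`. Such a direction may move any variable in the support of `x`, must preserve the
total mass `∑ d`, and must preserve the load `∑ τ d_τ` of every arm whose load constraint is
tight. Three support points on one arm give a direction preserving both mass and load. An
irregular arm (two support points, or one support point with slack load) carries a direction
that changes the mass, and two irregular arms can trade mass. Finally, a variable of an
irregular arm cannot equal `1/τ`: the arm's load would be exactly `1`, leaving no room for
another delay.
-/

/-- `x` is delay-feasible: every supported arm `i` has a unique nonzero variable
`x i τ`, and this variable equals `1/τ`. -/
def DelayFeasible {n : ℕ} (x : Fin n → ℕ → ℝ) : Prop :=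
  ∀ i τ, x i τ ≠ 0 → x i τ = ((τ : ℝ))⁻¹ ∧ ∀ τ', x i τ' ≠ 0 → τ' = τ

open Filter Topology Finset

theorem eq_zero_of_eventually_add_smul_mem {E : Type*} [AddCommGroup E] [Module ℝ E]
    {P : Set E} {x d : E} (hx : x ∈ P.extremePoints ℝ) (hd : ∀ᶠ t : ℝ in 𝓝 0, x + t • d ∈ P) :
    d = 0 := by
  obtain ⟨ε, hε, hball⟩ := Metric.eventually_nhds_iff.1 hd
  have hmem : ∀ t : ℝ, |t| < ε → x + t • d ∈ P := fun t ht => hball (by simpa using ht)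
  have hseg : x ∈ openSegment ℝ (x + (ε / 2) • d) (x + (-(ε / 2)) • d) :=
    ⟨1 / 2, 1 / 2, by norm_num, by norm_num, by norm_num, by module⟩
  have h := (mem_extremePoints.1 hx).2 _ (hmem _ (by rw [abs_of_pos (half_pos hε)]; linarith))
    _ (hmem _ (by rw [abs_neg, abs_of_pos (half_pos hε)]; linarith)) hseg
  simpa [hε.ne'] using h.1

namespace DelayLP

variable {ι : Type*}

lemma sum_mul_single {T : Finset ℕ} {a : ℕ} (ha : a ∈ T) (r : ℝ) :
    ∑ τ ∈ T, (τ : ℝ) * (Pi.single a r : ℕ → ℝ) τ = a * r := by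
  simp [Pi.single_apply, ha]

lemma sum_single {T : Finset ℕ} {a : ℕ} (ha : a ∈ T) (r : ℝ) :
    ∑ τ ∈ T, (Pi.single a r : ℕ → ℝ) τ = r := by
  simp [Pi.single_apply, ha]

lemma sum_sum_single [Fintype ι] [DecidableEq ι] (T : Finset ℕ) (i : ι)
    (v : ℕ → ℝ) : ∑ j, ∑ τ ∈ T, (Pi.single i v : ι → ℕ → ℝ) j τ = ∑ τ ∈ T, v τ := by
  rw [Fintype.sum_eq_single i fun j hj => by simp [hj]]
  simp

def polytope [Fintype ι] (T : Finset ℕ) (k : ℝ) : Set (ι → ℕ → ℝ) :=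
  {x | (∀ i τ, 0 ≤ x i τ) ∧ (∀ i τ, τ ∉ T → x i τ = 0) ∧
    (∑ i, ∑ τ ∈ T, x i τ) ≤ k ∧ (∀ i, (∑ τ ∈ T, (τ : ℝ) * x i τ) ≤ 1)}

def IsRegularArm (x : ι → ℕ → ℝ) (i : ι) : Prop :=
  ∀ τ, x i τ ≠ 0 → x i τ = ((τ : ℝ))⁻¹ ∧ ∀ τ', x i τ' ≠ 0 → τ' = τ

/-- Directions in which arm `i` of `x` can move, in both senses and by small enough steps,
without leaving the polytope, provided the total mass is preserved. -/
def armDirections (T : Finset ℕ) (x : ι → ℕ → ℝ) (i : ι) : Submodule ℝ (ℕ → ℝ) where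
  carrier := {v | (∀ τ, v τ ≠ 0 → x i τ ≠ 0) ∧
    (∑ τ ∈ T, (τ : ℝ) * v τ = 0 ∨ ∑ τ ∈ T, (τ : ℝ) * x i τ < 1)}
  zero_mem' := ⟨fun _ h => absurd rfl h, Or.inl (by simp)⟩
  add_mem' := by
    rintro v w ⟨hv, hv'⟩ ⟨hw, hw'⟩
    refine ⟨fun τ h => ?_, ?_⟩
    · by_cases hvτ : v τ = 0
      · exact hw τ (by simpa [hvτ] using h)
      · exact hv τ hvτ
    · rcases hv' with hv' | hv' <;> rcases hw' with hw' | hw'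
      · left
        simp only [Pi.add_apply, mul_add, sum_add_distrib, hv', hw', add_zero]
      all_goals exact Or.inr ‹_›
  smul_mem' := by
    rintro c v ⟨hv, hv'⟩
    refine ⟨fun τ h => hv τ (right_ne_zero_of_mul h), ?_⟩
    rcases hv' with hv' | hv'
    · left
      simp only [Pi.smul_apply, smul_eq_mul, mul_left_comm _ c, ← mul_sum, hv', mul_zero]
    · exact Or.inr hv'

lemma single_mem_armDirections [DecidableEq ι] {T : Finset ℕ} {x : ι → ℕ → ℝ} {i : ι}
    {v : ℕ → ℝ} (hv : v ∈ armDirections T x i) (j : ι) :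
    (Pi.single i v : ι → ℕ → ℝ) j ∈ armDirections T x j := by
  rcases eq_or_ne j i with rfl | hj
  · simpa using hv
  · simp [hj]

variable [Fintype ι] {T : Finset ℕ} {k : ℝ} {x : ι → ℕ → ℝ}

lemma eventually_add_smul_mem_polytope {d : ι → ℕ → ℝ}
    (hx : x ∈ polytope T k) (hd : ∀ i, d i ∈ armDirections T x i)
    (hmass : ∑ i, ∑ τ ∈ T, d i τ = 0) :
    ∀ᶠ t : ℝ in 𝓝 0, x + t • d ∈ polytope T k := by
  obtain ⟨hnonneg, hsupp, hbudget, hload⟩ := hx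
  have htendsto (a b : ℝ) : Tendsto (fun t : ℝ => a + t * b) (𝓝 0) (𝓝 a) := by
    have h : Continuous fun t : ℝ => a + t * b := by fun_prop
    simpa using h.tendsto 0
  have hd_zero {i τ} (h : x i τ = 0) : d i τ = 0 := by
    by_contra h'
    exact (hd i).1 τ h' h
  have hpos : ∀ᶠ t : ℝ in 𝓝 0, ∀ i, ∀ τ ∈ T, 0 ≤ x i τ + t * d i τ := by
    refine eventually_all.2 fun i => (eventually_all_finset T).2 fun τ _ => ?_
    rcases (hnonneg i τ).eq_or_lt with h | h
    · exact .of_forall fun t => by simp [← h, hd_zero h.symm]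
    · exact ((htendsto _ _).eventually_const_lt h).mono fun _ => le_of_lt
  have harm : ∀ᶠ t : ℝ in 𝓝 0, ∀ i,
      ∑ τ ∈ T, (τ : ℝ) * x i τ + t * ∑ τ ∈ T, (τ : ℝ) * d i τ ≤ 1 := by
    refine eventually_all.2 fun i => ?_
    rcases (hd i).2 with h | h
    · exact .of_forall fun t => by simpa [h] using hload i
    · exact ((htendsto _ _).eventually_lt_const h).mono fun _ => le_of_lt
  filter_upwards [hpos, harm] with t hpos harm
  refine ⟨fun i τ => ?_, fun i τ hτ => ?_, ?_, fun i => ?_⟩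
  · by_cases hτ : τ ∈ T
    · exact hpos i τ hτ
    · simp [hsupp i τ hτ, hd_zero (hsupp i τ hτ)]
  · simp [hsupp i τ hτ, hd_zero (hsupp i τ hτ)]
  · simpa [mul_add, sum_add_distrib, ← mul_sum, hmass] using hbudget
  · simpa [mul_add, sum_add_distrib, ← mul_sum, mul_left_comm _ t] using harm i

theorem eq_zero_of_mem_armDirections {d : ι → ℕ → ℝ}
    (hx : x ∈ (polytope T k).extremePoints ℝ) (hd : ∀ i, d i ∈ armDirections T x i)
    (hmass : ∑ i, ∑ τ ∈ T, d i τ = 0) : d = 0 :=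
  eq_zero_of_eventually_add_smul_mem hx (eventually_add_smul_mem_polytope hx.1 hd hmass)

theorem card_filter_ne_zero_le_two (hx : x ∈ (polytope T k).extremePoints ℝ) (i : ι) :
    (T.filter fun τ => x i τ ≠ 0).card ≤ 2 := by
  classical
  by_contra! h
  obtain ⟨a, ha, b, hb, c, hc, hab, hac, hbc⟩ := two_lt_card.1 h
  simp only [mem_filter] at ha hb hc
  set v : ℕ → ℝ := Pi.single a ((b : ℝ) - c) + Pi.single b ((c : ℝ) - a) +
    Pi.single c ((a : ℝ) - b)
  have hv : v ∈ armDirections T x i := by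
    refine ⟨fun τ hτ => ?_, Or.inl ?_⟩
    · by_contra h0
      rcases eq_or_ne τ a with rfl | hτa
      · exact ha.2 h0
      rcases eq_or_ne τ b with rfl | hτb
      · exact hb.2 h0
      rcases eq_or_ne τ c with rfl | hτc
      · exact hc.2 h0
      simp [v, hτa, hτb, hτc] at hτ
    · simp only [v, Pi.add_apply, mul_add, sum_add_distrib, sum_mul_single ha.1,
        sum_mul_single hb.1, sum_mul_single hc.1]
      ring
  have hmass : ∑ τ ∈ T, v τ = 0 := by
    simp only [v, Pi.add_apply, sum_add_distrib, sum_single ha.1, sum_single hb.1,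
      sum_single hc.1]
    ring
  have h0 := congr_fun (congr_fun (eq_zero_of_mem_armDirections hx
    (single_mem_armDirections hv) (by rw [sum_sum_single, hmass])) i) a
  have : (b : ℝ) ≠ c := by exact_mod_cast hbc
  simp [v, hab, hac, sub_eq_zero, this] at h0

theorem exists_mem_armDirections_sum_ne_zero (hx : x ∈ polytope T k) {i : ι}
    (hi : ¬IsRegularArm x i) : ∃ v ∈ armDirections T x i, ∑ τ ∈ T, v τ ≠ 0 := by
  obtain ⟨-, hsupp, -, hload⟩ := hx
  have hmemT {τ} (h : x i τ ≠ 0) : τ ∈ T := by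
    by_contra hτ
    exact h (hsupp i τ hτ)
  simp only [IsRegularArm, not_forall] at hi
  obtain ⟨a, ha, hi⟩ := hi
  by_cases huniq : ∀ τ, x i τ ≠ 0 → τ = a
  · have hxa : x i a ≠ (a : ℝ)⁻¹ := fun h => hi ⟨h, huniq⟩
    have hload_eq : ∑ τ ∈ T, (τ : ℝ) * x i τ = a * x i a :=
      sum_eq_single_of_mem a (hmemT ha) fun τ _ hτ => by
        rw [not_imp_comm.1 (huniq τ) hτ, mul_zero]
    refine ⟨Pi.single a 1, ⟨fun τ hτ => ?_, Or.inr ?_⟩, by simp [sum_single (hmemT ha)]⟩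
    · rcases eq_or_ne τ a with rfl | hτa
      · exact ha
      · simp [hτa] at hτ
    · rw [hload_eq]
      exact (hload_eq ▸ hload i).lt_of_ne fun h => hxa (eq_inv_of_mul_eq_one_right h)
  · push Not at huniq
    obtain ⟨b, hb, hba⟩ := huniq
    refine ⟨Pi.single a (b : ℝ) - Pi.single b (a : ℝ), ⟨fun τ hτ => ?_, Or.inl ?_⟩, ?_⟩
    · rcases eq_or_ne τ a with rfl | hτa
      · exact ha
      rcases eq_or_ne τ b with rfl | hτb
      · exact hb
      simp [hτa, hτb] at hτ
    · simp only [Pi.sub_apply, mul_sub, sum_sub_distrib, sum_mul_single (hmemT ha),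
        sum_mul_single (hmemT hb)]
      ring
    · simp only [Pi.sub_apply, sum_sub_distrib, sum_single (hmemT ha), sum_single (hmemT hb)]
      exact sub_ne_zero.2 (by exact_mod_cast hba)

theorem eq_of_not_isRegularArm (hx : x ∈ (polytope T k).extremePoints ℝ) {i j : ι}
    (hi : ¬IsRegularArm x i) (hj : ¬IsRegularArm x j) : i = j := by
  classical
  by_contra hij
  obtain ⟨v, hv, hv0⟩ := exists_mem_armDirections_sum_ne_zero hx.1 hi
  obtain ⟨w, hw, hw0⟩ := exists_mem_armDirections_sum_ne_zero hx.1 hj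
  set d : ι → ℕ → ℝ :=
    Pi.single i ((∑ τ ∈ T, w τ) • v) - Pi.single j ((∑ τ ∈ T, v τ) • w)
  have hd : d = 0 := by
    refine eq_zero_of_mem_armDirections hx (fun l => sub_mem ?_ ?_) ?_
    · exact single_mem_armDirections (Submodule.smul_mem _ _ hv) l
    · exact single_mem_armDirections (Submodule.smul_mem _ _ hw) l
    · simp only [d, Pi.sub_apply, sum_sub_distrib, sum_sum_single, Pi.smul_apply, smul_eq_mul,
        ← mul_sum]
      ring
  have hdi := congr_fun hd i
  simp [d, hij, hw0] at hdi
  exact hv0 (by simp [hdi])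

theorem lt_inv_of_not_isRegularArm (hx : x ∈ polytope T k) (hT : 0 ∉ T) {i : ι}
    (hi : ¬IsRegularArm x i) {τ : ℕ} (hτ : x i τ ≠ 0) : x i τ < (τ : ℝ)⁻¹ := by
  obtain ⟨hnonneg, hsupp, -, hload⟩ := hx
  have hmemT {σ} (h : x i σ ≠ 0) : σ ∈ T := by
    by_contra hσ
    exact h (hsupp i σ hσ)
  have hcast_pos {σ} (h : x i σ ≠ 0) : (0 : ℝ) < σ :=
    Nat.cast_pos.2 (Nat.pos_of_ne_zero fun h0 => hT (h0 ▸ hmemT h))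
  have hterm_nonneg : ∀ σ ∈ T, 0 ≤ (σ : ℝ) * x i σ :=
    fun σ _ => mul_nonneg σ.cast_nonneg (hnonneg i σ)
  have hle : (τ : ℝ) * x i τ ≤ 1 :=
    (single_le_sum hterm_nonneg (hmemT hτ)).trans (hload i)
  rw [← mul_lt_mul_iff_right₀ (hcast_pos hτ), mul_inv_cancel₀ (hcast_pos hτ).ne']
  refine hle.lt_of_ne fun htight => hi ?_
  have honly : ∀ σ, x i σ ≠ 0 → σ = τ := by
    intro σ hσ
    by_contra hne
    have hsum := add_le_sum hterm_nonneg (hmemT hτ) (hmemT hσ) (Ne.symm hne)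
    have hσpos : 0 < (σ : ℝ) * x i σ :=
      mul_pos (hcast_pos hσ) ((hnonneg i σ).lt_of_ne' hσ)
    linarith [hload i]
  intro σ hσ
  obtain rfl := honly σ hσ
  exact ⟨eq_inv_of_mul_eq_one_right htight, honly⟩

end DelayLP

/-- Sparsity pattern of extreme points: any extreme point `x` of the LP
`{x ≥ 0, x supported on delays in [1,τmax], ∑_{i,τ} x_{i,τ} ≤ k, ∑_τ τ·x_{i,τ} ≤ 1 ∀i}`
is almost-delay-feasible: every supported arm, with the possible exception of a single
irregular arm `ι`, has a unique nonzero variable equal to `1/τ`; the irregular arm has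
at most two nonzero variables, each strictly below `1/τ`. -/
theorem stmt_8 {n : ℕ} (k τmax : ℕ) (P : Set (Fin n → ℕ → ℝ))
    (hP : P = {x : Fin n → ℕ → ℝ |
      (∀ i τ, 0 ≤ x i τ) ∧
      (∀ i τ, τ ∉ Finset.Icc 1 τmax → x i τ = 0) ∧
      (∑ i, ∑ τ ∈ Finset.Icc 1 τmax, x i τ) ≤ (k : ℝ) ∧
      (∀ i, (∑ τ ∈ Finset.Icc 1 τmax, (τ : ℝ) * x i τ) ≤ 1)})
    (x : Fin n → ℕ → ℝ) (hx : x ∈ Set.extremePoints ℝ P) :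
    DelayFeasible x ∨
      ∃ ι : Fin n,
        (∀ i, i ≠ ι → ∀ τ, x i τ ≠ 0 →
          x i τ = ((τ : ℝ))⁻¹ ∧ ∀ τ', x i τ' ≠ 0 → τ' = τ) ∧
        ((Finset.Icc 1 τmax).filter (fun τ => x ι τ ≠ 0)).card ≤ 2 ∧
        (∀ τ, x ι τ ≠ 0 → x ι τ < ((τ : ℝ))⁻¹) := by
  subst hP
  change x ∈ (DelayLP.polytope (Icc 1 τmax) k).extremePoints ℝ at hx
  by_cases hreg : ∀ i, DelayLP.IsRegularArm x i
  · exact Or.inl hreg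
  push Not at hreg
  obtain ⟨ι, hι⟩ := hreg
  refine Or.inr ⟨ι, fun i hne => ?_, DelayLP.card_filter_ne_zero_le_two hx ι,
    fun τ => DelayLP.lt_inv_of_not_isRegularArm hx.1 (by simp) hι⟩
  by_contra hi
  exact hne (DelayLP.eq_of_not_isRegularArm hx hi hι)
end
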